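/- For every complex number z with Re z > 1, ∫_0^∞ x^{z−1}/sinh(x) dx = 2·(1 − 2^{−z})·Γ(z)·ζ(z). -/
import Mathlib

open Real Complex MeasureTheory

set_option maxHeartbeats 1000000 in
theorem mellin_inv_sinh (z : ℂ) (hz : 1 < z.re) :
    ∫ x in Set.Ioi (0 : ℝ), (x : ℂ) ^ (z - 1) / (Real.sinh x : ℂ) =
      2 * (1 - (2 : ℂ) ^ (-z)) * Complex.Gamma z * riemannZeta z := by
  have hz0 : 0 < z.re := by linarith
  have hzne : z ≠ 0 := Complex.ne_zero_of_one_lt_re hz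
  set F : ℝ → ℂ := fun x ↦ 1 / (Real.sinh x : ℂ) with hF_def
  -- the sum expansion of 1/sinh
  have hF : ∀ t ∈ Set.Ioi (0:ℝ), HasSum
      (fun n : ℕ ↦ (2:ℂ) * (rexp (-(2 * (n:ℝ) + 1) * t) : ℝ)) (F t) := by
    intro t ht
    rw [Set.mem_Ioi] at ht
    have hr : |rexp (-(2 * t))| < 1 := by
      rw [abs_of_pos (exp_pos _)]
      exact exp_lt_one_iff.mpr (by linarith)
    have hgeo := (hasSum_geometric_of_abs_lt_one hr).mul_left (2 * rexp (-t))
    have h2 : HasSum (fun n : ℕ ↦ 2 * rexp (-(2 * (n:ℝ) + 1) * t))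
        (2 * rexp (-t) * (1 - rexp (-(2 * t)))⁻¹) := by
      refine hgeo.congr_fun fun n ↦ ?_
      rw [← Real.exp_nat_mul, mul_assoc, ← Real.exp_add]
      congr 1
      ring
    have h1 : rexp (-(2*t)) = rexp (-t) * rexp (-t) := by
      rw [← Real.exp_add]; ring_nf
    have h2' : rexp t * rexp (-t) = 1 := by rw [← Real.exp_add]; simp
    have hsinh : (0:ℝ) < Real.sinh t := Real.sinh_pos_iff.mpr ht
    have hkey : 1 - rexp (-(2*t)) = rexp (-t) * (2 * Real.sinh t) := by
      rw [Real.sinh_eq, h1]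
      nlinarith [Real.exp_pos t, Real.exp_pos (-t)]
    have hval : 2 * rexp (-t) * (1 - rexp (-(2 * t)))⁻¹ = 1 / Real.sinh t := by
      rw [hkey]
      have he := Real.exp_ne_zero (-t)
      field_simp
    rw [hval] at h2
    have := hasSum_ofReal.mpr h2
    simp only [ofReal_mul, ofReal_div, ofReal_one, ofReal_ofNat] at this ⊢
    exact this
  -- summability
  have h_sum : Summable fun n : ℕ ↦ ‖(2:ℂ)‖ / ((2 * (n:ℝ) + 1 : ℝ)) ^ z.re := by
    have hbase : Summable fun n : ℕ ↦ ((n:ℝ) + 1) ^ (-z.re) := by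
      have h0 : Summable fun n : ℕ ↦ ((n:ℝ)) ^ (-z.re) :=
        (Real.summable_nat_rpow (p := -z.re)).mpr (by linarith)
      exact ((summable_nat_add_iff 1).mpr h0).congr fun n ↦ by push_cast; ring_nf
    refine Summable.of_nonneg_of_le (fun n ↦ by positivity) (fun n ↦ ?_) (hbase.mul_left ‖(2:ℂ)‖)
    rw [Real.rpow_neg (by positivity), ← div_eq_mul_inv]
    gcongr
    exact le_trans (by linarith [Nat.cast_nonneg (α := ℝ) n]) (le_refl (2 * (n:ℝ)))
  have hp : ∀ n : ℕ, (2:ℂ) = 0 ∨ (0:ℝ) < 2 * n + 1 :=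
    fun n ↦ Or.inr (by positivity)
  have hmellin := hasSum_mellin (a := fun _ : ℕ ↦ (2:ℂ)) (p := fun n : ℕ ↦ 2 * n + 1)
    hp hz0 hF h_sum
  -- identify the integral with the mellin transform
  have hInt : (∫ x in Set.Ioi (0 : ℝ), (x : ℂ) ^ (z - 1) / (Real.sinh x : ℂ)) = mellin F z := by
    rw [mellin]
    refine setIntegral_congr_fun measurableSet_Ioi fun x hx ↦ ?_
    simp [F, smul_eq_mul, div_eq_mul_inv]
  rw [hInt, ← hmellin.tsum_eq]
  -- zeta side
  have hsumf : Summable fun n : ℕ ↦ 1 / (n : ℂ) ^ z :=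
    Complex.summable_one_div_nat_cpow.mpr hz
  have hzeta : riemannZeta z = ∑' n : ℕ, 1 / (n : ℂ) ^ z :=
    zeta_eq_tsum_one_div_nat_cpow hz
  have heven : ∀ k : ℕ, (1 : ℂ) / ((2 * k : ℕ) : ℂ) ^ z = (2:ℂ) ^ (-z) * (1 / (k : ℂ) ^ z) := by
    intro k
    have h2k : (((2 * k : ℕ) : ℂ)) ^ z = (2:ℂ) ^ z * (k:ℂ) ^ z := by
      push_cast
      rw [show ((2:ℂ)) = ((2:ℝ):ℂ) by norm_num, show ((k:ℂ)) = (((k:ℕ):ℝ):ℂ) by norm_num,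
        ← Complex.mul_cpow_ofReal_nonneg (by norm_num) (Nat.cast_nonneg k)]
      try norm_num
    rw [h2k, cpow_neg]
    field_simp
  have hevenSummable : Summable fun k : ℕ ↦ (1 : ℂ) / ((2 * k : ℕ) : ℂ) ^ z := by
    simp_rw [heven]
    exact hsumf.mul_left _
  have hoddSummable : Summable fun k : ℕ ↦ (1 : ℂ) / ((2 * k + 1 : ℕ) : ℂ) ^ z :=
    hsumf.comp_injective fun a b h ↦ by omega
  have hsplit := tsum_even_add_odd (f := fun n : ℕ ↦ 1 / (n:ℂ) ^ z) hevenSummable hoddSummable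
  have hevenSum : (∑' k : ℕ, (1 : ℂ) / ((2 * k : ℕ) : ℂ) ^ z) = (2:ℂ) ^ (-z) * riemannZeta z := by
    rw [hzeta, ← tsum_mul_left]
    exact tsum_congr heven
  have hoddSum : (∑' k : ℕ, (1 : ℂ) / ((2 * k + 1 : ℕ) : ℂ) ^ z)
      = (1 - (2:ℂ) ^ (-z)) * riemannZeta z := by
    have h := hsplit
    rw [hevenSum, ← hzeta] at h
    linear_combination h
  have hfun : (fun n : ℕ ↦ Complex.Gamma z * 2 / ((2 * (n:ℝ) + 1 : ℝ) : ℂ) ^ z)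
      = fun n : ℕ ↦ (2 * Complex.Gamma z) * ((1:ℂ) / ((2 * n + 1 : ℕ) : ℂ) ^ z) := by
    funext n
    have hc : ((2 * (n:ℝ) + 1 : ℝ) : ℂ) = ((2 * n + 1 : ℕ) : ℂ) := by push_cast; ring
    rw [hc, mul_one_div, mul_comm (Complex.Gamma z) 2]
  rw [hfun, tsum_mul_left, hoddSum]
  ring
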